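/- arXiv:1903.07439 — 4 statements merged into one kernel-verified Lean document; each statement's English description precedes it below -/
import Mathlib

section
/- Let u(p) = p(1-p) and v(p) = p/2 - p^2/3 on [0,1]. Then for every p in (0,1], the supremum over p' in [p,1] of (u(p') - v(p))/(2p' - p) is attained only at p' = p, i.e., for all p' in (p,1], (u(p') - v(p))/(2p'-p) < (u(p)-v(p))/p. -/
lemma cross_multiplied_gap_eq (p p' : ℝ) :
    (p * (1 - p) - (p / 2 - p ^ 2 / 3)) * (2 * p' - p)
      - (p' * (1 - p') - (p / 2 - p ^ 2 / 3)) * p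
      = p * (p' - p) * (p' - p / 3) := by
  ring

theorem stmt_1 (u v : ℝ → ℝ)
    (hu : ∀ p, u p = p * (1 - p))
    (hv : ∀ p, v p = p / 2 - p ^ 2 / 3) :
    ∀ p ∈ Set.Ioc (0 : ℝ) 1, ∀ p' ∈ Set.Ioc p 1,
      (u p' - v p) / (2 * p' - p) < (u p - v p) / p := by
  rintro p ⟨hp, -⟩ p' ⟨hpp', -⟩
  have hgap : 0 < p * (p' - p) * (p' - p / 3) :=
    mul_pos (mul_pos hp (sub_pos.2 hpp')) (by linarith)
  rw [hu, hu, hv, div_lt_div_iff₀ (by linarith) hp]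
  linarith [cross_multiplied_gap_eq p p']
end

section
/- Fix p* in [0,1], μ > 0, q in (p*,1), and a function u twice differentiable in a neighborhood of q. Let φ be twice differentiable on [q,1] with φ'(p)(p - p*) = μ(u(p) - φ(p)) for p in [q,1]. If the function p ↦ μ(u(p) - φ(q))/(p - p* + μ(p - q)) attains its maximum over [q,1] at p = q, then φ''(q) ≤ 0. -/
/-!
At `p = q` the ratio in `hmax` equals `φ'(q)` by the ODE, and it is maximal there among
`p ∈ [q, 1]`, so by the one-sided Fermat rule its derivative at `q` is `≤ 0`; by the quotient
rule this reads `μ u'(q) ≤ (1 + μ) φ'(q)`. Differentiating the ODE at `q` gives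
`φ''(q) (q - p*) = μ u'(q) - (1 + μ) φ'(q)`, and `q - p* > 0`.
-/

open Set

theorem HasDerivWithinAt.nonpos_of_isMaxOn_Icc_left {f : ℝ → ℝ} {f' a b : ℝ} (hab : a < b)
    (hf : HasDerivWithinAt f f' (Icc a b) a) (hmax : IsMaxOn f (Icc a b) a) : f' ≤ 0 := by
  have hcone : b - a ∈ posTangentConeAt (Icc a b) a :=
    sub_mem_posTangentConeAt_of_segment_subset (segment_eq_Icc hab.le).subset
  have h := hmax.localize.hasFDerivWithinAt_nonpos hf hcone
  rw [ContinuousLinearMap.toSpanSingleton_apply, smul_eq_mul] at h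
  exact nonpos_of_mul_nonpos_right h (sub_pos.2 hab)

theorem deriv_mul_sub_mul_deriv_nonpos_of_isMaxOn_div_Icc_left {N D : ℝ → ℝ} {N' D' a b : ℝ}
    (hab : a < b) (hN : HasDerivWithinAt N N' (Icc a b) a)
    (hD : HasDerivWithinAt D D' (Icc a b) a) (hDa : D a ≠ 0)
    (hmax : IsMaxOn (fun p => N p / D p) (Icc a b) a) : N' * D a - N a * D' ≤ 0 := by
  have h := (hN.div hD hDa).nonpos_of_isMaxOn_Icc_left hab hmax
  simpa using (div_le_iff₀ (sq_pos_of_ne_zero hDa)).1 h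

theorem stmt_4_general (pstar μ q ε : ℝ) (u u' φ φ' φ'' : ℝ → ℝ)
    (hq : q ∈ Set.Ioo pstar 1) (hε : 0 < ε)
    (hu' : ∀ p ∈ Set.Ioo (q - ε) (q + ε), HasDerivAt u (u' p) p)
    (hφ' : ∀ p ∈ Set.Icc q 1, HasDerivWithinAt φ (φ' p) (Set.Icc q 1) p)
    (hφ'' : ∀ p ∈ Set.Icc q 1, HasDerivWithinAt φ' (φ'' p) (Set.Icc q 1) p)
    (hode : ∀ p ∈ Set.Icc q 1, φ' p * (p - pstar) = μ * (u p - φ p))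
    (hmax : ∀ p ∈ Set.Icc q 1,
      μ * (u p - φ q) / (p - pstar + μ * (p - q)) ≤
      μ * (u q - φ q) / (q - pstar)) :
    φ'' q ≤ 0 := by
  obtain ⟨hpq, hq1⟩ := hq
  have hqI : q ∈ Icc q 1 := left_mem_Icc.2 hq1.le
  have hu'q : HasDerivAt u (u' q) q := hu' q ⟨by linarith, by linarith⟩
  have hode_deriv : φ'' q * (q - pstar) + φ' q = μ * (u' q - φ' q) := by
    refine (uniqueDiffOn_Icc hq1 q hqI).eq_deriv (f := fun p => φ' p * (p - pstar)) _ ?_ ?_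
    · exact ((hφ'' q hqI).mul ((hasDerivWithinAt_id q _).sub_const pstar)).congr_deriv (by simp)
    · exact ((hu'q.hasDerivWithinAt.sub (hφ' q hqI)).const_mul μ).congr hode (hode q hqI)
  have hratio : μ * u' q * (q - pstar) - μ * (u q - φ q) * (1 + μ) ≤ 0 := by
    have hN := (hu'q.hasDerivWithinAt (s := Icc q 1)).sub_const (φ q) |>.const_mul μ
    have hD := ((hasDerivWithinAt_id q (Icc q 1)).sub_const pstar).add
      (((hasDerivWithinAt_id q (Icc q 1)).sub_const q).const_mul μ)
    have h := deriv_mul_sub_mul_deriv_nonpos_of_isMaxOn_div_Icc_left hq1 hN hD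
      (by simpa using (sub_pos.2 hpq).ne') (fun p hp => by simpa using hmax p hp)
    simpa using h
  have hslope : μ * u' q - (1 + μ) * φ' q ≤ 0 := by
    rw [← hode q hqI] at hratio
    exact nonpos_of_mul_nonpos_left (by linarith) (sub_pos.2 hpq)
  exact nonpos_of_mul_nonpos_left (by linarith) (sub_pos.2 hpq)

theorem stmt_4 (pstar μ q ε : ℝ) (u u' u'' φ φ' φ'' : ℝ → ℝ)
    (hps : pstar ∈ Set.Icc (0 : ℝ) 1) (hμ : 0 < μ)
    (hq : q ∈ Set.Ioo pstar 1) (hε : 0 < ε)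
    (hu' : ∀ p ∈ Set.Ioo (q - ε) (q + ε), HasDerivAt u (u' p) p)
    (hu'' : ∀ p ∈ Set.Ioo (q - ε) (q + ε), HasDerivAt u' (u'' p) p)
    (hφ' : ∀ p ∈ Set.Icc q 1, HasDerivWithinAt φ (φ' p) (Set.Icc q 1) p)
    (hφ'' : ∀ p ∈ Set.Icc q 1, HasDerivWithinAt φ' (φ'' p) (Set.Icc q 1) p)
    (hode : ∀ p ∈ Set.Icc q 1, φ' p * (p - pstar) = μ * (u p - φ p))
    (hmax : ∀ p ∈ Set.Icc q 1,
      μ * (u p - φ q) / (p - pstar + μ * (p - q)) ≤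
      μ * (u q - φ q) / (q - pstar)) :
    φ'' q ≤ 0 :=
  stmt_4_general pstar μ q ε u u' φ φ' φ'' hq hε hu' hφ' hφ'' hode hmax
end

section
/- Let v : [0,1] → ℝ be concave, p* in [0,1), and suppose that for every q in (p*,1] the inequality μ(v(q) - u(q)) + v'_-(q)(q - p*) ≥ 0 holds, where u is continuous, μ > 0, and v'_- denotes the left derivative. If p in (p*,1) satisfies μ(v(p) - u(p)) + v'_-(p)(p - p*) = 0, then the left and right derivatives of v at p coincide: v'_-(p) = v'_+(p). -/
/-!
Concavity alone gives `v'_+(p) ≤ v'_-(p)`. For the converse, every `q > p` satisfies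
`v'_-(q) ≤ v'_+(p)`, so `q ↦ μ (v q - u q) + v'_+(p) (q - p*)` dominates the nonnegative
expression of the hypothesis. Letting `q ↓ p` and using continuity gives
`μ (v p - u p) + v'_+(p) (p - p*) ≥ 0 = μ (v p - u p) + v'_-(p) (p - p*)`,
and `p - p* > 0` yields `v'_-(p) ≤ v'_+(p)`.
-/

open Set Filter Topology

theorem derivWithin_Iio_eq_Iic {E : Type*} [NormedAddCommGroup E] [NormedSpace ℝ E]
    (f : ℝ → E) (x : ℝ) : derivWithin f (Iio x) x = derivWithin f (Iic x) x := by
  by_cases H : DifferentiableWithinAt ℝ f (Iio x) x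
  · exact (H.hasDerivWithinAt.Iic_of_Iio.derivWithin (uniqueDiffWithinAt_Iic x)).symm
  · rw [derivWithin_zero_of_not_differentiableWithinAt H,
      derivWithin_zero_of_not_differentiableWithinAt]
    exact fun h ↦ H (h.mono Iio_subset_Iic_self)

namespace ConcaveOn

variable {S : Set ℝ} {f : ℝ → ℝ} {x y : ℝ}

lemma differentiableWithinAt_Ioi_of_mem_interior (hf : ConcaveOn ℝ S f)
    (hx : x ∈ interior S) : DifferentiableWithinAt ℝ f (Ioi x) x := by
  simpa using (hf.neg.differentiableWithinAt_Ioi_of_mem_interior hx).neg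

lemma differentiableWithinAt_Iio_of_mem_interior (hf : ConcaveOn ℝ S f)
    (hx : x ∈ interior S) : DifferentiableWithinAt ℝ f (Iio x) x := by
  simpa using (hf.neg.differentiableWithinAt_Iio_of_mem_interior hx).neg

lemma rightDeriv_le_leftDeriv_of_mem_interior (hf : ConcaveOn ℝ S f) (hx : x ∈ interior S) :
    derivWithin f (Ioi x) x ≤ derivWithin f (Iio x) x := by
  simpa [derivWithin.neg] using hf.neg.leftDeriv_le_rightDeriv_of_mem_interior hx

lemma leftDeriv_le_rightDeriv_of_lt (hf : ConcaveOn ℝ S f) (hx : x ∈ interior S)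
    (hy : y ∈ interior S) (hxy : x < y) :
    derivWithin f (Iio y) y ≤ derivWithin f (Ioi x) x :=
  calc derivWithin f (Iio y) y
      ≤ slope f x y := hf.leftDeriv_le_slope (interior_subset hx) (interior_subset hy) hxy
          (hf.differentiableWithinAt_Iio_of_mem_interior hy)
    _ ≤ derivWithin f (Ioi x) x := hf.slope_le_rightDeriv (interior_subset hx)
          (interior_subset hy) hxy (hf.differentiableWithinAt_Ioi_of_mem_interior hx)

lemma leftDeriv_le_rightDeriv_of_eventually_le {g : ℝ → ℝ} {c : ℝ} (hf : ConcaveOn ℝ S f)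
    (hx : x ∈ interior S) (hcx : c < x) (hg : ContinuousWithinAt g (Ioi x) x)
    (hmin : ∀ᶠ q in 𝓝[>] x,
      g x + derivWithin f (Iio x) x * (x - c) ≤ g q + derivWithin f (Iio q) q * (q - c)) :
    derivWithin f (Iio x) x ≤ derivWithin f (Ioi x) x := by
  set L := derivWithin f (Iio x) x
  set R := derivWithin f (Ioi x) x
  have hdom : ∀ᶠ q in 𝓝[>] x, g x + L * (x - c) ≤ g q + R * (q - c) := by
    filter_upwards [hmin, nhdsWithin_le_nhds (isOpen_interior.mem_nhds hx),
      self_mem_nhdsWithin] with q hq hqS (hxq : x < q)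
    have hLq := hf.leftDeriv_le_rightDeriv_of_lt hx hqS hxq
    linarith [mul_le_mul_of_nonneg_right hLq (sub_pos.2 (hcx.trans hxq)).le]
  have hlim : Tendsto (fun q ↦ g q + R * (q - c)) (𝓝[>] x) (𝓝 (g x + R * (x - c))) :=
    (hg.add (by fun_prop : ContinuousWithinAt (fun q ↦ R * (q - c)) (Ioi x) x)).tendsto
  have hLR : g x + L * (x - c) ≤ g x + R * (x - c) := ge_of_tendsto hlim hdom
  exact le_of_mul_le_mul_right (by linarith) (sub_pos.2 hcx)

end ConcaveOn

theorem stmt_7_general (v u : ℝ → ℝ) (pstar μ p : ℝ)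
    (hconc : ConcaveOn ℝ (Set.Icc 0 1) v)
    (hps : pstar ∈ Set.Ico (0 : ℝ) 1)
    (hucont : Continuous u)
    (hineq : ∀ q ∈ Set.Ioc pstar 1,
      μ * (v q - u q) + (derivWithin v (Set.Iic q) q) * (q - pstar) ≥ 0)
    (hp : p ∈ Set.Ioo pstar 1)
    (heq : μ * (v p - u p) + (derivWithin v (Set.Iic p) p) * (p - pstar) = 0) :
    derivWithin v (Set.Iic p) p = derivWithin v (Set.Ici p) p := by
  have hpS : p ∈ interior (Icc 0 1) := by
    rw [interior_Icc]
    exact ⟨hps.1.trans_lt hp.1, hp.2⟩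
  have hvp : ContinuousAt v p :=
    hconc.continuousOn_interior.continuousAt (isOpen_interior.mem_nhds hpS)
  have hg : ContinuousWithinAt (fun q ↦ μ * (v q - u q)) (Ioi p) p :=
    (continuousAt_const.mul (hvp.sub hucont.continuousAt)).continuousWithinAt
  simp only [← derivWithin_Iio_eq_Iic] at hineq heq ⊢
  have hmin : ∀ᶠ q in 𝓝[>] p, μ * (v p - u p) + derivWithin v (Iio p) p * (p - pstar) ≤
      μ * (v q - u q) + derivWithin v (Iio q) q * (q - pstar) := by
    filter_upwards [Ioo_mem_nhdsGT hp.2] with q hq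
    exact heq ▸ hineq q ⟨hp.1.trans hq.1, hq.2.le⟩
  rw [← derivWithin_Ioi_eq_Ici]
  exact le_antisymm (hconc.leftDeriv_le_rightDeriv_of_eventually_le hpS hp.1 hg hmin)
    (hconc.rightDeriv_le_leftDeriv_of_mem_interior hpS)

theorem stmt_7 (v u : ℝ → ℝ) (pstar μ p : ℝ)
    (hconc : ConcaveOn ℝ (Set.Icc 0 1) v)
    (hps : pstar ∈ Set.Ico (0 : ℝ) 1) (hμ : 0 < μ)
    (hucont : Continuous u)
    (hvcont : ContinuousOn v (Set.Icc 0 1))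
    (hdiffL : ∀ q ∈ Set.Ioc pstar 1, DifferentiableWithinAt ℝ v (Set.Iic q) q)
    (hineq : ∀ q ∈ Set.Ioc pstar 1,
      μ * (v q - u q) + (derivWithin v (Set.Iic q) q) * (q - pstar) ≥ 0)
    (hp : p ∈ Set.Ioo pstar 1)
    (hdiffR : DifferentiableWithinAt ℝ v (Set.Ici p) p)
    (heq : μ * (v p - u p) + (derivWithin v (Set.Iic p) p) * (p - pstar) = 0) :
    derivWithin v (Set.Iic p) p = derivWithin v (Set.Ici p) p :=
  stmt_7_general v u pstar μ p hconc hps hucont hineq hp heq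
end

section
/- Let u(p) = (9p² - 9p + 2)/(6p - 3) for p ∈ [0,1/3] ∪ [2/3,1] and u(p) = 0 for p ∈ (1/3,2/3). Let p̄ = (√13 - 1)/6. Then the function v defined by v(p) = p - 2/3 on [0,1/3), v(p) = -1/(9p) on [1/3, p̄), and v(p) = -1/(9p̄) + (p - p̄)/(9p̄²) on [p̄,1], is continuous, concave, and differentiable on (0,1), and satisfies v'(p)·p = u(p) - v(p) for all p in (1/3, p̄). -/
/-!
On `[1/3, p̄]` the function `v10` is the hyperbola `-1/(9p)`, and on `[0, 1/3]` and `[p̄, 1]` it is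
continued by the tangent lines of that hyperbola at `1/3` and at `p̄`. Hence `v10` is differentiable
on all of `ℝ`, with derivative `1/(9c²)` where `c` is `p` clamped to `[1/3, p̄]`. This derivative is
antitone, so `v10` is concave, and on the middle piece the ODE is the identity
`p / (9p²) = 0 - (-1/(9p))`, since `u10` vanishes on `(1/3, 2/3) ⊇ (1/3, p̄)`.
-/

noncomputable def u10 (p : ℝ) : ℝ :=
  if p ≤ 1/3 then (9 * p ^ 2 - 9 * p + 2) / (6 * p - 3)
  else if p < 2/3 then 0
  else (9 * p ^ 2 - 9 * p + 2) / (6 * p - 3)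

noncomputable def pbar10 : ℝ := (Real.sqrt 13 - 1) / 6

noncomputable def v10 (p : ℝ) : ℝ :=
  if p < 1/3 then p - 2/3
  else if p < pbar10 then -1 / (9 * p)
  else -1 / (9 * pbar10) + (p - pbar10) / (9 * pbar10 ^ 2)

open Set Filter Topology

theorem HasDerivAt.of_nhdsLE_of_nhdsGE {F : Type*} [NormedAddCommGroup F] [NormedSpace ℝ F]
    {f g h : ℝ → F} {a : ℝ} {d : F} (hg : HasDerivAt g d a) (hh : HasDerivAt h d a)
    (hfg : f =ᶠ[𝓝[≤] a] g) (hfh : f =ᶠ[𝓝[≥] a] h) : HasDerivAt f d a := by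
  have hle := hg.hasDerivWithinAt.congr_of_eventuallyEq hfg (hfg.eq_of_nhdsWithin self_mem_Iic)
  have hge := hh.hasDerivWithinAt.congr_of_eventuallyEq hfh (hfh.eq_of_nhdsWithin self_mem_Ici)
  simpa only [Iic_union_Ici, hasDerivWithinAt_univ] using hle.union hge

theorem one_third_lt_pbar10 : 1/3 < pbar10 := by
  have : 3 < Real.sqrt 13 := Real.lt_sqrt (by norm_num) |>.mpr (by norm_num)
  unfold pbar10; linarith

theorem pbar10_lt_two_thirds : pbar10 < 2/3 := by
  have : Real.sqrt 13 < 5 := Real.sqrt_lt' (by norm_num) |>.mpr (by norm_num)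
  unfold pbar10; linarith

theorem u10_eq_zero {p : ℝ} (hp : p ∈ Ioo (1/3) (2/3)) : u10 p = 0 := by
  rw [u10, if_neg hp.1.not_ge, if_pos hp.2]

theorem v10_eqOn_Iic : EqOn v10 (fun p => p - 2/3) (Iic (1/3)) := by
  intro p (hp : p ≤ 1/3)
  rcases hp.lt_or_eq with hp | rfl
  · rw [v10, if_pos hp]
  · rw [v10, if_neg (lt_irrefl _), if_pos one_third_lt_pbar10]
    norm_num

theorem v10_eqOn_Icc : EqOn v10 (fun p => -1 / (9 * p)) (Icc (1/3) pbar10) := by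
  rintro p ⟨hp₁, hp₂⟩
  rcases hp₂.lt_or_eq with hp₂ | rfl
  · rw [v10, if_neg hp₁.not_gt, if_pos hp₂]
  · rw [v10, if_neg hp₁.not_gt, if_neg (lt_irrefl _)]
    simp

theorem v10_eqOn_Ici :
    EqOn v10 (fun p => -1 / (9 * pbar10) + (p - pbar10) / (9 * pbar10 ^ 2)) (Ici pbar10) := by
  intro p (hp : pbar10 ≤ p)
  rw [v10, if_neg (one_third_lt_pbar10.trans_le hp).not_gt, if_neg hp.not_gt]

noncomputable def v10Deriv (p : ℝ) : ℝ := 1 / (9 * max (1/3) (min p pbar10) ^ 2)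

theorem v10Deriv_antitone : Antitone v10Deriv := by
  intro p q hpq
  unfold v10Deriv
  gcongr

theorem hasDerivAt_neg_one_div_nine_mul {p : ℝ} (hp : p ≠ 0) :
    HasDerivAt (fun x => -1 / (9 * x)) (1 / (9 * p ^ 2)) p :=
  ((hasDerivAt_const p (-1 : ℝ)).fun_div ((hasDerivAt_id' p).const_mul 9)
    (mul_ne_zero (by norm_num) hp)).congr_deriv (by field_simp; ring)

theorem hasDerivAt_v10 (p : ℝ) : HasDerivAt v10 (v10Deriv p) p := by
  have hpbar := one_third_lt_pbar10
  have hline (x : ℝ) : HasDerivAt (fun p => p - 2/3) 1 x := (hasDerivAt_id' x).sub_const _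
  have htangent (x : ℝ) : HasDerivAt (fun p => -1 / (9 * pbar10) + (p - pbar10) / (9 * pbar10 ^ 2))
      (1 / (9 * pbar10 ^ 2)) x :=
    (((hasDerivAt_id' x).sub_const _).div_const _).const_add _
  rcases lt_trichotomy p (1/3) with hp | rfl | hp
  · rw [v10Deriv, min_eq_left (hp.le.trans hpbar.le), max_eq_left hp.le]
    exact ((hline p).congr_deriv (by norm_num)).congr_of_eventuallyEq
      (eventuallyEq_of_mem (Iic_mem_nhds hp) v10_eqOn_Iic)
  · rw [v10Deriv, min_eq_left hpbar.le, max_self]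
    exact ((hline _).congr_deriv (by norm_num)).of_nhdsLE_of_nhdsGE
      (hasDerivAt_neg_one_div_nine_mul (by norm_num))
      (eventuallyEq_of_mem self_mem_nhdsWithin v10_eqOn_Iic)
      (eventuallyEq_of_mem (Icc_mem_nhdsGE hpbar) v10_eqOn_Icc)
  rcases lt_trichotomy p pbar10 with hp' | rfl | hp'
  · rw [v10Deriv, min_eq_left hp'.le, max_eq_right hp.le]
    exact (hasDerivAt_neg_one_div_nine_mul (by positivity)).congr_of_eventuallyEq
      (eventuallyEq_of_mem (Icc_mem_nhds hp hp') v10_eqOn_Icc)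
  · rw [v10Deriv, min_self, max_eq_right hp.le]
    exact (hasDerivAt_neg_one_div_nine_mul (by positivity)).of_nhdsLE_of_nhdsGE (htangent _)
      (eventuallyEq_of_mem (Icc_mem_nhdsLE hp) v10_eqOn_Icc)
      (eventuallyEq_of_mem self_mem_nhdsWithin v10_eqOn_Ici)
  · rw [v10Deriv, min_eq_right hp'.le, max_eq_right hpbar.le]
    exact (htangent p).congr_of_eventuallyEq (eventuallyEq_of_mem (Ici_mem_nhds hp') v10_eqOn_Ici)

theorem stmt_10 :
    ContinuousOn v10 (Set.Icc 0 1) ∧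
    ConcaveOn ℝ (Set.Icc 0 1) v10 ∧
    (∀ p ∈ Set.Ioo (0 : ℝ) 1, DifferentiableAt ℝ v10 p) ∧
    (∀ p ∈ Set.Ioo (1/3 : ℝ) pbar10, deriv v10 p * p = u10 p - v10 p) := by
  have hdiff : Differentiable ℝ v10 := fun p => (hasDerivAt_v10 p).differentiableAt
  have hderiv : deriv v10 = v10Deriv := funext fun p => (hasDerivAt_v10 p).deriv
  refine ⟨hdiff.continuous.continuousOn, ?_, fun p _ => hdiff p, fun p hp => ?_⟩
  · exact (Antitone.concaveOn_univ_of_deriv hdiff (hderiv ▸ v10Deriv_antitone)).subset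
      (subset_univ _) (convex_Icc 0 1)
  · have hp₀ : 0 < p := by linarith [hp.1]
    rw [hderiv, v10Deriv, min_eq_left hp.2.le, max_eq_right hp.1.le,
      u10_eq_zero ⟨hp.1, hp.2.trans pbar10_lt_two_thirds⟩, v10_eqOn_Icc ⟨hp.1.le, hp.2.le⟩]
    field_simp
    ring
end
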